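/- arXiv:1003.4856 — 2 statements merged into one kernel-verified Lean document; each statement's English description precedes it below -/
import Mathlib

section
/- Let (Σ, T, μ) be an α-mixing shift system. For any sequence of sets A_n ∈ ℱ_0^{n-1} with μ(A_n) > 0 such that μ(τ_{A_n} ≤ n) → 0 as n → ∞, there exist constants λ(A_n) ∈ (0, 2] such that the hitting time to A_n, rescaled by λ(A_n)μ(A_n), converges in distribution to the exponential law: sup_{t ≥ 0} |μ({x : λ(A_n)μ(A_n)τ_{A_n}(x) > t}) − e^{−t}| → 0 as n → ∞. Moreover, this convergence is uniform over any family of sequences (A_n) for which the convergence μ(τ_{A_n} ≤ n) → 0 is uniform. -/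
/-!
Write `f s = μ(τ_A > s)` for `A ∈ ℱ_0^M`. Cutting `{τ_A > s + G + t}` at a gap `G = M + 1 + g`,
α-mixing makes `f` approximately multiplicative: `f (s + G + t) = f s * f t` up to an error
`(1 - f G) + α(g)`. For `A = A_n` this error is at most `ε_n = (1 + g) μ(τ_{A_n} ≤ n) + α(g)`,
which tends to `0` uniformly once `g = g_n → ∞` slowly enough. Let `F = f L` be the first value
of `f` below `1 - √ε_n`. Along the multiples of `L + G` the approximate multiplicativity pins `f`
to the geometric sequence `F ^ k`, and monotonicity interpolates in between, so `f s` is within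
`O(√ε_n)` of `exp (-c s)`, where `exp (-c (L + G)) = F`. Then `λ = c / μ(A)`, and `λ ≤ 2` because
`-log F ≤ 2 (1 - F) ≤ 2 L μ(A)`.
-/

open MeasureTheory Filter Set
open scoped ENNReal Topology

noncomputable section

/-- First hitting time (at time ≥ 1) of the set `A` under `T`, valued in `ℕ∞`. -/
def hitTime {X : Type*} (T : X → X) (A : Set X) (x : X) : ℕ∞ :=
  ⨅ k ∈ {k : ℕ | 1 ≤ k ∧ T^[k] x ∈ A}, (k : ℕ∞)

/-- The shift map on one-sided sequences. -/
def shift (𝒜 : Type*) : (ℕ → 𝒜) → (ℕ → 𝒜) := fun x n => x (n + 1)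

/-- The σ-algebra `ℱ_m^n` generated by the coordinates `m, …, n`. -/
def coordSigma (𝒜 : Type*) [m𝒜 : MeasurableSpace 𝒜] (m n : ℕ) :
    MeasurableSpace (ℕ → 𝒜) :=
  ⨆ i ∈ Set.Icc m n, m𝒜.comap (fun x => x i)

/-- The α-mixing coefficient `α(g)`. -/
def alphaMix {𝒜 : Type*} [MeasurableSpace 𝒜] (μ : Measure (ℕ → 𝒜)) (g : ℕ) : ℝ :=
  ⨆ m : ℕ, ⨆ n : ℕ,
    ⨆ A : {A : Set (ℕ → 𝒜) // MeasurableSet[coordSigma 𝒜 0 n] A},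
      ⨆ B : {B : Set (ℕ → 𝒜) // MeasurableSet[coordSigma 𝒜 (n + g) (m + g)] B},
        |(μ ((A : Set (ℕ → 𝒜)) ∩ B)).toReal - (μ A).toReal * (μ B).toReal|

lemma sub_le_mul_of_sub_succ_le {u : ℕ → ℝ} {p : ℝ} (h : ∀ s, u s - u (s + 1) ≤ p) (s : ℕ) :
    u 0 - u s ≤ s * p := by
  induction s with
  | zero => simp
  | succ s ih => push_cast; linarith [h s]

lemma le_pow_mul_add_div_of_le_mul_add {u : ℕ → ℝ} {a F ε : ℝ} (hF0 : 0 ≤ F) (hF1 : F < 1)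
    (hε : 0 ≤ ε) (h0 : u 0 ≤ a) (h : ∀ k, u (k + 1) ≤ u k * F + ε) (k : ℕ) :
    u k ≤ F ^ k * a + ε / (1 - F) := by
  have hF : 0 < 1 - F := by linarith
  induction k with
  | zero => simpa using add_le_add h0 (div_nonneg hε hF.le)
  | succ k ih =>
    calc u (k + 1) ≤ u k * F + ε := h k
      _ ≤ (F ^ k * a + ε / (1 - F)) * F + ε := by gcongr
      _ = F ^ (k + 1) * a + ε / (1 - F) := by field_simp; ring

lemma abs_sub_pow_le_div_of_abs_sub_mul_le {u : ℕ → ℝ} {F ε : ℝ} (hF0 : 0 ≤ F) (hF1 : F < 1)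
    (h0 : u 0 = 1) (h : ∀ k, |u (k + 1) - u k * F| ≤ ε) (k : ℕ) :
    |u k - F ^ k| ≤ ε / (1 - F) := by
  have hε : 0 ≤ ε := (abs_nonneg _).trans (h 0)
  have upper := le_pow_mul_add_div_of_le_mul_add hF0 hF1 hε h0.le
    (fun k => by linarith [(abs_le.1 (h k)).2]) k
  have lower := le_pow_mul_add_div_of_le_mul_add (u := fun k => -u k) (a := -1) hF0 hF1 hε
    (by simp [h0]) (fun k => by linarith [(abs_le.1 (h k)).1]) k
  rw [abs_le]
  constructor <;> linarith

lemma exists_mem_Ioc_of_sub_succ_le {u : ℕ → ℝ} {a p : ℝ} (h0 : a < u 0) (hK : ∃ K, u K ≤ a)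
    (h : ∀ s, u s - u (s + 1) ≤ p) : ∃ L, a - p < u L ∧ u L ≤ a := by
  obtain ⟨L, hL, hL'⟩ : ∃ L, a < u L ∧ u (L + 1) ≤ a := by
    by_contra! hne
    obtain ⟨K, hK⟩ := hK
    have : ∀ k, a < u k := fun k => by
      induction k with
      | zero => exact h0
      | succ k ih => exact hne k ih
    exact (this K).not_ge hK
  exact ⟨L + 1, by linarith [h L], hL'⟩

lemma abs_sub_le_of_antitone_of_abs_sub_le_on_multiples {f φ : ℕ → ℝ} {L : ℕ} {δ ω : ℝ}
    (hL : 0 < L) (hf : Antitone f) (hφ : Antitone φ) (hgrid : ∀ k, |f (k * L) - φ (k * L)| ≤ δ)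
    (hosc : ∀ k, φ (k * L) - φ ((k + 1) * L) ≤ ω) (m : ℕ) :
    |f m - φ m| ≤ δ + ω := by
  have hk : m / L * L ≤ m := Nat.div_mul_le_self m L
  have hk' : m ≤ (m / L + 1) * L := by
    rw [add_mul, one_mul]; exact (Nat.lt_div_mul_add hL).le
  have h1 := abs_le.1 (hgrid (m / L))
  have h2 := abs_le.1 (hgrid (m / L + 1))
  have := hosc (m / L)
  have := hf hk; have := hf hk'; have := hφ hk; have := hφ hk'
  rw [abs_le]
  constructor <;> linarith

lemma exists_tendsto_atTop_mul_tendsto_zero {r : ℕ → ℝ} (hr0 : ∀ n, 0 ≤ r n)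
    (hr : Tendsto r atTop (𝓝 0)) :
    ∃ g : ℕ → ℕ, Tendsto g atTop atTop ∧ Tendsto (fun n => (g n : ℝ) * r n) atTop (𝓝 0) := by
  set v : ℕ → ℝ := fun n => √(r n) + 1 / (n + 1)
  have hv0 : ∀ n, 0 < v n := fun n => by positivity
  have hv : Tendsto v atTop (𝓝 0) := by
    simpa [v] using (hr.sqrt).add tendsto_one_div_add_atTop_nhds_zero_nat
  refine ⟨fun n => ⌊(v n)⁻¹⌋₊, ?_, ?_⟩
  · exact tendsto_nat_floor_atTop.comp
      (tendsto_nhdsWithin_iff.2 ⟨hv, Eventually.of_forall hv0⟩).inv_tendsto_nhdsGT_zero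
  · refine squeeze_zero (fun n => mul_nonneg (Nat.cast_nonneg _) (hr0 n)) (fun n => ?_) hv
    have hr_le : r n ≤ v n ^ 2 := by
      have := Real.sq_sqrt (hr0 n)
      nlinarith [Real.sqrt_nonneg (r n), (by positivity : (0:ℝ) ≤ 1 / (n + 1))]
    calc (⌊(v n)⁻¹⌋₊ : ℝ) * r n ≤ (v n)⁻¹ * v n ^ 2 := by
          gcongr
          · exact hr0 n
          · exact Nat.floor_le (inv_nonneg.2 (hv0 n).le)
      _ = v n := by field_simp

lemma neg_log_le_two_mul_one_sub {x : ℝ} (hx : 1 / 2 ≤ x) (hx1 : x ≤ 1) :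
    -Real.log x ≤ 2 * (1 - x) := by
  have hx0 : 0 < x := by linarith
  have := Real.one_sub_inv_le_log_of_pos hx0
  have : x⁻¹ - 1 ≤ 2 * (1 - x) := by
    rw [inv_eq_one_div, div_sub_one hx0.ne', div_le_iff₀ hx0]; nlinarith
  linarith

lemma abs_sub_exp_neg_le_of_abs_sub_mul_le {f : ℕ → ℝ} {F ε : ℝ} {N : ℕ} (hN : 0 < N)
    (hF0 : 0 < F) (hF1 : F < 1) (hf0 : f 0 = 1) (hf : Antitone f)
    (hrec : ∀ k, |f ((k + 1) * N) - f (k * N) * F| ≤ ε) (m : ℕ) :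
    |f m - Real.exp (-(-Real.log F / N * m))| ≤ ε / (1 - F) + (1 - F) := by
  set c := -Real.log F / N
  have hc : 0 ≤ c := div_nonneg (neg_nonneg.2 (Real.log_nonpos hF0.le hF1.le)) (Nat.cast_nonneg N)
  have hexp : ∀ k : ℕ, Real.exp (-(c * ((k * N : ℕ) : ℝ))) = F ^ k := fun k => by
    rw [← Real.exp_log hF0, ← Real.exp_nat_mul]
    congr 1
    simp only [c]
    push_cast
    field_simp
  have hφ : Antitone fun m : ℕ => Real.exp (-(c * m)) := fun a b hab =>
    Real.exp_le_exp.2 (neg_le_neg (mul_le_mul_of_nonneg_left (by exact_mod_cast hab) hc))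
  refine abs_sub_le_of_antitone_of_abs_sub_le_on_multiples hN hf hφ (fun k => ?_) (fun k => ?_) m
  · simpa only [hexp] using abs_sub_pow_le_div_of_abs_sub_mul_le (u := fun k => f (k * N))
      hF0.le hF1 (by simpa using hf0) hrec k
  · simp only [hexp, pow_succ]
    nlinarith [pow_le_one₀ hF0.le hF1.le (n := k), pow_nonneg hF0.le k]

lemma exists_abs_sub_exp_le_of_abs_sub_mul_le {f : ℕ → ℝ} {p ε : ℝ} {G : ℕ}
    (hf0 : f 0 = 1) (hf : Antitone f) (hlim : Tendsto f atTop (𝓝 0))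
    (hstep : ∀ s, f s - f (s + 1) ≤ p) (hmul : ∀ s t, |f (s + G + t) - f s * f t| ≤ ε)
    (hpε : p ≤ ε) (hε : ε ≤ 1 / 64) :
    ∃ c, 0 < c ∧ c ≤ 2 * p ∧ ∀ m : ℕ, |f m - Real.exp (-(c * m))| ≤ 3 * √ε := by
  obtain ⟨K, hK⟩ := (hlim.eventually (gt_mem_nhds (by norm_num : (0 : ℝ) < 1 / 2))).exists
  have hp : 0 < p := by
    have := sub_le_mul_of_sub_succ_le hstep K
    by_contra! hp
    nlinarith [(Nat.cast_nonneg K : (0 : ℝ) ≤ K)]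
  set η := √ε
  have hε_eq : ε = η ^ 2 := (Real.sq_sqrt (hp.le.trans hpε)).symm
  have hη0 : 0 < η := Real.sqrt_pos.2 (hp.trans_le hpε)
  have hη8 : η ≤ 1 / 8 := by nlinarith
  have hpη : p ≤ η := by nlinarith
  obtain ⟨L, hFlow, hFle⟩ := exists_mem_Ioc_of_sub_succ_le (a := 1 - η)
    (by rw [hf0]; linarith) ⟨K, by linarith⟩ hstep
  have hL : 0 < L := Nat.pos_of_ne_zero fun h => by simp [h, hf0] at hFle; linarith
  have hL' : (L : ℝ) ≤ (L + G : ℕ) := by exact_mod_cast Nat.le_add_right L G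
  have hc0 : 0 < -Real.log (f L) / (L + G : ℕ) :=
    div_pos (neg_pos.2 (Real.log_neg (by linarith) (by linarith))) (by positivity)
  have hc2 : -Real.log (f L) / (L + G : ℕ) ≤ 2 * p := by
    have := neg_log_le_two_mul_one_sub (x := f L) (by linarith) (by linarith)
    have := sub_le_mul_of_sub_succ_le hstep L
    rw [hf0] at this
    rw [div_le_iff₀ (by positivity)]
    nlinarith
  refine ⟨_, hc0, hc2, fun m => ?_⟩
  have hrec : ∀ k, |f ((k + 1) * (L + G)) - f (k * (L + G)) * f L| ≤ ε := fun k => by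
    simpa only [show (k + 1) * (L + G) = k * (L + G) + G + L by ring] using hmul (k * (L + G)) L
  calc _ ≤ ε / (1 - f L) + (1 - f L) :=
        abs_sub_exp_neg_le_of_abs_sub_mul_le (by omega) (by linarith) (by linarith) hf0 hf hrec m
    _ ≤ η + 2 * η := by
        gcongr
        · rw [div_le_iff₀ (by linarith), hε_eq]; nlinarith
        · linarith
    _ = 3 * √ε := by ring

lemma ofReal_lt_ofReal_mul_iff_floor_lt {c t : ℝ} (hc : 0 < c) (ht : 0 ≤ t) (τ : ℕ∞) :
    ENNReal.ofReal t < ENNReal.ofReal c * (τ : ℝ≥0∞) ↔ (⌊t / c⌋₊ : ℕ∞) < τ := by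
  induction τ using ENat.recTopCoe with
  | top => simp [ENNReal.mul_top (ENNReal.ofReal_pos.2 hc).ne']
  | coe j =>
    rw [ENat.toENNReal_coe, ← ENNReal.ofReal_natCast, ← ENNReal.ofReal_mul hc.le,
      ENNReal.ofReal_lt_ofReal_iff', Nat.cast_lt, Nat.floor_lt (div_nonneg ht hc.le),
      div_lt_iff₀ hc]
    constructor
    · exact fun h => by linarith [h.1]
    · exact fun h => ⟨by linarith, by nlinarith⟩

lemma abs_exp_neg_mul_floor_sub_exp_neg_le {c t : ℝ} (hc : 0 < c) (ht : 0 ≤ t) :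
    |Real.exp (-(c * ⌊t / c⌋₊)) - Real.exp (-t)| ≤ c := by
  set a := c * ⌊t / c⌋₊
  have ha : a ≤ t := by
    have := Nat.floor_le (div_nonneg ht hc.le); rw [le_div_iff₀ hc] at this; linarith
  have ha' : t < a + c := by
    have := Nat.lt_floor_add_one (t / c); rw [div_lt_iff₀ hc] at this; linarith
  have hexp : Real.exp (-t) = Real.exp (-a) * Real.exp (-(t - a)) := by
    rw [← Real.exp_add]; ring_nf
  have h1 := Real.one_sub_le_exp_neg (t - a)
  have h2 : Real.exp (-a) ≤ 1 := Real.exp_le_one_iff.2 (neg_nonpos.2 (by positivity))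
  have h3 : Real.exp (-(t - a)) ≤ 1 := Real.exp_le_one_iff.2 (by linarith)
  rw [abs_of_nonneg (by nlinarith [Real.exp_pos (-a)])]
  nlinarith [Real.exp_pos (-a)]

section Survival

variable {X : Type*} (T : X → X) (A : Set X)

def survivalSet (s : ℕ) : Set X := ⋂ j ∈ Icc 1 s, T^[j] ⁻¹' Aᶜ

variable {T A}

lemma mem_survivalSet {s : ℕ} {x : X} : x ∈ survivalSet T A s ↔ ∀ j ∈ Icc 1 s, T^[j] x ∉ A := by
  simp [survivalSet]

lemma lt_hitTime_iff {s : ℕ} {x : X} : (s : ℕ∞) < hitTime T A x ↔ x ∈ survivalSet T A s := by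
  rw [mem_survivalSet, hitTime]
  constructor
  · intro h j hj hjA
    have : (s : ℕ∞) < j := h.trans_le (iInf₂_le j ⟨hj.1, hjA⟩)
    exact (Nat.cast_lt.1 this).not_ge hj.2
  · intro h
    refine (Nat.cast_lt.2 s.lt_succ_self).trans_le (le_iInf₂ fun k hk => ?_)
    exact Nat.cast_le.2 (not_le.1 fun hks => h k ⟨hk.1, hks⟩ hk.2)

lemma setOf_hitTime_le_eq_compl (s : ℕ) :
    {x | hitTime T A x ≤ s} = (survivalSet T A s)ᶜ := by
  ext x; simp [← lt_hitTime_iff]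

variable (T A)

@[simp] lemma survivalSet_zero : survivalSet T A 0 = univ := by
  simp [survivalSet]

lemma survivalSet_one : survivalSet T A 1 = T ⁻¹' Aᶜ := by
  simp [survivalSet]

lemma survivalSet_antitone : Antitone (survivalSet T A) := fun _ _ hst =>
  biInter_subset_biInter_left (Icc_subset_Icc_right hst)

lemma survivalSet_add (s t : ℕ) :
    survivalSet T A (s + t) = survivalSet T A s ∩ T^[s] ⁻¹' survivalSet T A t := by
  ext x
  simp only [mem_inter_iff, mem_preimage, mem_survivalSet, mem_Icc, ← Function.iterate_add_apply]
  constructor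
  · intro h
    exact ⟨fun j hj => h j ⟨hj.1, by omega⟩, fun j hj => by
      simpa only [add_comm] using h (j + s) ⟨by omega, by omega⟩⟩
  · rintro ⟨h₁, h₂⟩ j hj
    rcases le_or_gt j s with hjs | hjs
    · exact h₁ j ⟨hj.1, hjs⟩
    · simpa [show j - s + s = j by omega] using h₂ (j - s) ⟨by omega, by omega⟩

lemma survivalSet_sdiff_add_subset (s t : ℕ) :
    survivalSet T A s \ survivalSet T A (s + t) ⊆ T^[s] ⁻¹' (survivalSet T A t)ᶜ := by
  rw [survivalSet_add]
  rintro x ⟨hs, hst⟩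
  exact fun ht => hst ⟨hs, ht⟩

lemma survivalSet_sdiff_succ_subset (s : ℕ) :
    survivalSet T A s \ survivalSet T A (s + 1) ⊆ T^[s + 1] ⁻¹' A := by
  refine (survivalSet_sdiff_add_subset T A s 1).trans fun x hx => ?_
  rw [mem_preimage, Function.iterate_succ_apply']
  simpa [survivalSet_one] using hx

end Survival

section Measure

variable {X : Type*} [MeasurableSpace X] (μ : Measure X) (T : X → X) (A : Set X)

def survival (s : ℕ) : ℝ := μ.real (survivalSet T A s)

variable {μ T A} [IsProbabilityMeasure μ]

lemma measurableSet_survivalSet (hT : Measurable T) (hA : MeasurableSet A) (s : ℕ) :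
    MeasurableSet (survivalSet T A s) :=
  MeasurableSet.biInter (to_countable _) fun j _ => hT.iterate j hA.compl

@[simp] lemma survival_zero : survival μ T A 0 = 1 := by
  simp [survival, survivalSet_zero]

lemma survival_antitone : Antitone (survival μ T A) := fun _ _ h =>
  measureReal_mono (survivalSet_antitone T A h)

lemma survival_add_add_le_measureReal_inter (s G t : ℕ) :
    survival μ T A (s + G + t) ≤ μ.real (survivalSet T A s ∩ T^[s + G] ⁻¹' survivalSet T A t) := by
  rw [survival, survivalSet_add T A (s + G)]
  exact measureReal_mono
    (inter_subset_inter_left _ (survivalSet_antitone T A (Nat.le_add_right s G)))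

lemma survival_one (hT : MeasurePreserving T μ μ) (hA : MeasurableSet A) :
    survival μ T A 1 = 1 - μ.real A := by
  rw [survival, survivalSet_one, hT.measureReal_preimage hA.compl.nullMeasurableSet,
    probReal_compl_eq_one_sub hA]

lemma measureReal_survivalSet_sdiff_add_le (hT : MeasurePreserving T μ μ) (hA : MeasurableSet A)
    (s t : ℕ) :
    μ.real (survivalSet T A s \ survivalSet T A (s + t)) ≤ 1 - survival μ T A t := by
  have hmeas := measurableSet_survivalSet hT.measurable hA t
  calc μ.real (survivalSet T A s \ survivalSet T A (s + t))
      ≤ μ.real (T^[s] ⁻¹' (survivalSet T A t)ᶜ) :=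
        measureReal_mono (survivalSet_sdiff_add_subset T A s t)
    _ = 1 - survival μ T A t := by
        rw [(hT.iterate s).measureReal_preimage hmeas.compl.nullMeasurableSet,
          probReal_compl_eq_one_sub hmeas, survival]

lemma survival_sub_survival_add_le (hT : MeasurePreserving T μ μ) (hA : MeasurableSet A) (s t : ℕ) :
    survival μ T A s - survival μ T A (s + t) ≤ 1 - survival μ T A t := by
  rw [survival, survival, ← measureReal_sdiff (survivalSet_antitone T A (Nat.le_add_right s t))
    (measurableSet_survivalSet hT.measurable hA _)]
  exact measureReal_survivalSet_sdiff_add_le hT hA s t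

lemma survival_sub_survival_succ_le (hT : MeasurePreserving T μ μ) (hA : MeasurableSet A) (s : ℕ) :
    survival μ T A s - survival μ T A (s + 1) ≤ μ.real A := by
  have hmeas := measurableSet_survivalSet hT.measurable hA
  calc survival μ T A s - survival μ T A (s + 1)
      = μ.real (survivalSet T A s \ survivalSet T A (s + 1)) :=
        (measureReal_sdiff (survivalSet_antitone T A (Nat.le_succ s)) (hmeas _)).symm
    _ ≤ μ.real (T^[s + 1] ⁻¹' A) := measureReal_mono (survivalSet_sdiff_succ_subset T A s)
    _ = μ.real A := (hT.iterate (s + 1)).measureReal_preimage hA.nullMeasurableSet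

lemma measureReal_le_one_sub_survival (hT : MeasurePreserving T μ μ) (hA : MeasurableSet A)
    {n : ℕ} (hn : 1 ≤ n) : μ.real A ≤ 1 - survival μ T A n := by
  linarith [survival_one hT hA, survival_antitone (μ := μ) (T := T) (A := A) hn]

lemma one_sub_survival_add_le (hT : MeasurePreserving T μ μ) (hA : MeasurableSet A) {n : ℕ}
    (hn : 1 ≤ n) (g : ℕ) :
    1 - survival μ T A (n + g) ≤ (1 + g) * (1 - survival μ T A n) := by
  have hsplit := survival_sub_survival_add_le hT hA n g
  have hg := sub_le_mul_of_sub_succ_le (survival_sub_survival_succ_le hT hA) g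
  have hA_le := measureReal_le_one_sub_survival hT hA hn
  rw [survival_zero] at hg
  nlinarith [(Nat.cast_nonneg g : (0 : ℝ) ≤ g)]

lemma measureReal_inter_le_survival_add_add (hT : MeasurePreserving T μ μ) (hA : MeasurableSet A)
    (s G t : ℕ) :
    μ.real (survivalSet T A s ∩ T^[s + G] ⁻¹' survivalSet T A t)
      ≤ survival μ T A (s + G + t) + (1 - survival μ T A G) := by
  have hsub : survivalSet T A s ∩ T^[s + G] ⁻¹' survivalSet T A t ⊆
      survivalSet T A (s + G + t) ∪ (survivalSet T A s \ survivalSet T A (s + G)) := by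
    rw [survivalSet_add T A (s + G)]
    rintro x ⟨hs, ht⟩
    by_cases hsG : x ∈ survivalSet T A (s + G)
    exacts [Or.inl ⟨hsG, ht⟩, Or.inr ⟨hs, hsG⟩]
  calc _ ≤ _ := measureReal_mono hsub
    _ ≤ _ := measureReal_union_le _ _
    _ ≤ _ := add_le_add_right (measureReal_survivalSet_sdiff_add_le hT hA s G) _

end Measure

section Shift

lemma shift_iterate_apply {𝒜 : Type*} (k : ℕ) (x : ℕ → 𝒜) (j : ℕ) :
    (shift 𝒜)^[k] x j = x (j + k) := by
  induction k generalizing x with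
  | zero => rfl
  | succ k ih => rw [Function.iterate_succ_apply, ih]; rfl

variable {𝒜 : Type*} [m𝒜 : MeasurableSpace 𝒜]

lemma coordSigma_le (a b : ℕ) : coordSigma 𝒜 a b ≤ MeasurableSpace.pi :=
  iSup₂_le fun i _ => (measurable_pi_apply i).comap_le

lemma coordSigma_mono {a a' b b' : ℕ} (ha : a' ≤ a) (hb : b ≤ b') :
    coordSigma 𝒜 a b ≤ coordSigma 𝒜 a' b' :=
  biSup_mono fun _ hi => Icc_subset_Icc ha hb hi

lemma comap_shift_iterate_coordSigma_le (a b k : ℕ) :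
    (coordSigma 𝒜 a b).comap (shift 𝒜)^[k] ≤ coordSigma 𝒜 (a + k) (b + k) := by
  simp only [coordSigma, MeasurableSpace.comap_iSup, MeasurableSpace.comap_comp]
  refine iSup₂_le fun i hi => ?_
  have : (fun x : ℕ → 𝒜 => x i) ∘ (shift 𝒜)^[k] = fun x => x (i + k) :=
    funext fun x => shift_iterate_apply k x i
  rw [this]
  exact le_iSup₂ (f := fun j (_ : j ∈ Icc (a + k) (b + k)) => m𝒜.comap fun x : ℕ → 𝒜 => x j)
    (i + k) ⟨Nat.add_le_add_right hi.1 k, Nat.add_le_add_right hi.2 k⟩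

lemma MeasurableSet.shift_iterate_preimage {a b : ℕ} (k : ℕ) {s : Set (ℕ → 𝒜)}
    (hs : MeasurableSet[coordSigma 𝒜 a b] s) :
    MeasurableSet[coordSigma 𝒜 (a + k) (b + k)] ((shift 𝒜)^[k] ⁻¹' s) :=
  comap_shift_iterate_coordSigma_le a b k _ ⟨s, hs, rfl⟩

lemma measurableSet_coordSigma_survivalSet {A : Set (ℕ → 𝒜)} {M : ℕ}
    (hA : MeasurableSet[coordSigma 𝒜 0 M] A) (s : ℕ) :
    MeasurableSet[coordSigma 𝒜 0 (s + M)] (survivalSet (shift 𝒜) A s) :=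
  MeasurableSet.biInter (to_countable _) fun j hj =>
    coordSigma_mono (by omega) (by simp only [mem_Icc] at hj; omega) _
      (hA.compl.shift_iterate_preimage j)

end Shift

section Mixing

variable {𝒜 : Type*} [MeasurableSpace 𝒜] (μ : Measure (ℕ → 𝒜)) [IsProbabilityMeasure μ]

lemma abs_measureReal_inter_sub_le_alphaMix {g n m : ℕ} {S B : Set (ℕ → 𝒜)}
    (hS : MeasurableSet[coordSigma 𝒜 0 n] S) (hB : MeasurableSet[coordSigma 𝒜 (n + g) (m + g)] B) :
    |μ.real (S ∩ B) - μ.real S * μ.real B| ≤ alphaMix μ g := by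
  have hle_one : ∀ S B : Set (ℕ → 𝒜), |μ.real (S ∩ B) - μ.real S * μ.real B| ≤ 1 := fun S B => by
    have := measureReal_le_one (μ := μ) (s := S ∩ B)
    have := measureReal_le_one (μ := μ) (s := S)
    have := measureReal_le_one (μ := μ) (s := B)
    have : 0 ≤ μ.real S * μ.real B := by positivity
    rw [abs_le]; constructor <;> nlinarith [measureReal_nonneg (μ := μ) (s := S ∩ B),
      measureReal_nonneg (μ := μ) (s := S), measureReal_nonneg (μ := μ) (s := B)]
  have h₃ : ∀ n m (S : {S : Set (ℕ → 𝒜) // MeasurableSet[coordSigma 𝒜 0 n] S}),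
      ⨆ B : {B : Set (ℕ → 𝒜) // MeasurableSet[coordSigma 𝒜 (n + g) (m + g)] B},
        |μ.real (S ∩ B) - μ.real S * μ.real B| ≤ 1 :=
    fun _ _ _ => Real.iSup_le (fun _ => hle_one _ _) zero_le_one
  have h₂ : ∀ n m, ⨆ S : {S : Set (ℕ → 𝒜) // MeasurableSet[coordSigma 𝒜 0 n] S},
      ⨆ B : {B : Set (ℕ → 𝒜) // MeasurableSet[coordSigma 𝒜 (n + g) (m + g)] B},
        |μ.real (S ∩ B) - μ.real S * μ.real B| ≤ 1 :=
    fun _ _ => Real.iSup_le (h₃ _ _) zero_le_one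
  refine le_ciSup_of_le ⟨1, forall_mem_range.2 fun m => Real.iSup_le (h₂ · m) zero_le_one⟩ m ?_
  refine le_ciSup_of_le ⟨1, forall_mem_range.2 (h₂ · m)⟩ n ?_
  refine le_ciSup_of_le ⟨1, forall_mem_range.2 (h₃ n m)⟩ ⟨S, hS⟩ ?_
  exact le_ciSup_of_le ⟨1, forall_mem_range.2 fun _ => hle_one _ _⟩ ⟨B, hB⟩ le_rfl

lemma alphaMix_nonneg (g : ℕ) : 0 ≤ alphaMix μ g :=
  (abs_nonneg _).trans (abs_measureReal_inter_sub_le_alphaMix μ (n := 0) (m := 0)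
    (@MeasurableSet.empty _ (coordSigma 𝒜 0 0))
    (@MeasurableSet.empty _ (coordSigma 𝒜 (0 + g) (0 + g))))

end Mixing

section ExponentialLaw

variable {𝒜 : Type*} [MeasurableSpace 𝒜] {μ : Measure (ℕ → 𝒜)} [IsProbabilityMeasure μ]
  {A : Set (ℕ → 𝒜)} {M : ℕ}

lemma abs_measureReal_survivalSet_inter_sub_le (hT : MeasurePreserving (shift 𝒜) μ μ)
    (hA : MeasurableSet[coordSigma 𝒜 0 M] A) (s t g : ℕ) :
    |μ.real (survivalSet (shift 𝒜) A s ∩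
        (shift 𝒜)^[s + (M + 1 + g)] ⁻¹' survivalSet (shift 𝒜) A t) -
      survival μ (shift 𝒜) A s * survival μ (shift 𝒜) A t| ≤ alphaMix μ g := by
  have hB : MeasurableSet[coordSigma 𝒜 (s + M + g) (t + M + s + M + 1 + g)]
      ((shift 𝒜)^[s + (M + 1 + g)] ⁻¹' survivalSet (shift 𝒜) A t) :=
    coordSigma_mono (by omega) (by omega) _
      ((measurableSet_coordSigma_survivalSet hA t).shift_iterate_preimage _)
  have hmix := abs_measureReal_inter_sub_le_alphaMix μ
    (measurableSet_coordSigma_survivalSet hA s) hB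
  rwa [(hT.iterate _).measureReal_preimage
    (coordSigma_le _ _ _ (measurableSet_coordSigma_survivalSet hA t)).nullMeasurableSet] at hmix

lemma survival_add_le (hT : MeasurePreserving (shift 𝒜) μ μ)
    (hA : MeasurableSet[coordSigma 𝒜 0 M] A) (s t g : ℕ) :
    survival μ (shift 𝒜) A (s + (M + 1 + g) + t)
      ≤ survival μ (shift 𝒜) A s * survival μ (shift 𝒜) A t + alphaMix μ g := by
  have := survival_add_add_le_measureReal_inter (μ := μ) (T := shift 𝒜) (A := A) s (M + 1 + g) t
  linarith [(abs_le.1 (abs_measureReal_survivalSet_inter_sub_le hT hA s t g)).2]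

lemma abs_survival_add_sub_mul_le (hT : MeasurePreserving (shift 𝒜) μ μ)
    (hA : MeasurableSet[coordSigma 𝒜 0 M] A) (s t g : ℕ) :
    |survival μ (shift 𝒜) A (s + (M + 1 + g) + t) -
        survival μ (shift 𝒜) A s * survival μ (shift 𝒜) A t|
      ≤ (1 - survival μ (shift 𝒜) A (M + 1 + g)) + alphaMix μ g := by
  have hmix := abs_le.1 (abs_measureReal_survivalSet_inter_sub_le hT hA s t g)
  have := survival_add_add_le_measureReal_inter (μ := μ) (T := shift 𝒜) (A := A) s (M + 1 + g) t
  have := measureReal_inter_le_survival_add_add hT (coordSigma_le _ _ _ hA) s (M + 1 + g) t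
  rw [abs_le]
  constructor <;> linarith

lemma tendsto_survival_zero (hT : MeasurePreserving (shift 𝒜) μ μ)
    (hmix : Tendsto (alphaMix μ) atTop (𝓝 0)) (hA : MeasurableSet[coordSigma 𝒜 0 M] A)
    (hp : 0 < μ A) : Tendsto (survival μ (shift 𝒜) A) atTop (𝓝 0) := by
  have hp' : 0 < μ.real A := ENNReal.toReal_pos hp.ne' (measure_ne_top μ A)
  have hp1 : μ.real A ≤ 1 := measureReal_le_one
  refine tendsto_order.2 ⟨fun a ha => Eventually.of_forall fun _ => ha.trans_le
    measureReal_nonneg, fun b hb => ?_⟩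
  obtain ⟨g, hg⟩ := (hmix.eventually (gt_mem_nhds (by positivity : 0 < μ.real A * b / 2))).exists
  obtain ⟨k, hk⟩ := ((tendsto_pow_atTop_nhds_zero_of_lt_one (by linarith)
    (by linarith : 1 - μ.real A < 1)).eventually (gt_mem_nhds (by positivity : 0 < b / 2))).exists
  -- Along the times `k * Q`, the mixing estimate with `t = 1` makes survival decay geometrically.
  set Q := M + 1 + g + 1
  have hgeom := le_pow_mul_add_div_of_le_mul_add (u := fun k => survival μ (shift 𝒜) A (k * Q))
    (a := 1) (F := 1 - μ.real A) (by linarith) (by linarith)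
    (alphaMix_nonneg μ g) (by simp) (fun k => by
      simpa [show (k + 1) * Q = k * Q + (M + 1 + g) + 1 by ring, survival_one hT
        (coordSigma_le _ _ _ hA)] using survival_add_le hT hA (k * Q) 1 g) k
  have : alphaMix μ g / (1 - (1 - μ.real A)) < b / 2 := by
    rw [sub_sub_cancel, div_lt_iff₀ hp']; linarith
  filter_upwards [eventually_ge_atTop (k * Q)] with n hn
  linarith [survival_antitone (μ := μ) (T := shift 𝒜) (A := A) hn]

lemma exists_abs_measureReal_hitTime_sub_exp_le (hT : MeasurePreserving (shift 𝒜) μ μ)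
    (hmix : Tendsto (alphaMix μ) atTop (𝓝 0)) (hA : MeasurableSet[coordSigma 𝒜 0 M] A)
    (hp : 0 < μ A) {g : ℕ} {ε : ℝ}
    (herr : (1 - survival μ (shift 𝒜) A (M + 1 + g)) + alphaMix μ g ≤ ε)
    (hpε : μ.real A ≤ ε) (hε : ε ≤ 1 / 64) :
    ∃ l ∈ Ioc (0 : ℝ) 2, ∀ t : ℝ, 0 ≤ t →
      |μ.real {x | ENNReal.ofReal t < ENNReal.ofReal l * μ A * (hitTime (shift 𝒜) A x : ℝ≥0∞)}
        - Real.exp (-t)| ≤ 5 * √ε := by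
  have hp' : 0 < μ.real A := ENNReal.toReal_pos hp.ne' (measure_ne_top μ A)
  obtain ⟨c, hc0, hc2, hclose⟩ := exists_abs_sub_exp_le_of_abs_sub_mul_le survival_zero
    survival_antitone (tendsto_survival_zero hT hmix hA hp)
    (survival_sub_survival_succ_le hT (coordSigma_le _ _ _ hA))
    (fun s t => (abs_survival_add_sub_mul_le hT hA s t g).trans herr) hpε hε
  refine ⟨c / μ.real A, ⟨div_pos hc0 hp', (div_le_iff₀ hp').2 hc2⟩, fun t ht => ?_⟩
  have hset : {x | ENNReal.ofReal t < ENNReal.ofReal (c / μ.real A) * μ A *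
      (hitTime (shift 𝒜) A x : ℝ≥0∞)} = survivalSet (shift 𝒜) A ⌊t / c⌋₊ := by
    ext x
    rw [mem_ofPred_eq, ← ofReal_measureReal, ← ENNReal.ofReal_mul (div_pos hc0 hp').le,
      div_mul_cancel₀ _ hp'.ne', ofReal_lt_ofReal_mul_iff_floor_lt hc0 ht, lt_hitTime_iff]
  have hpη : μ.real A ≤ √ε := hpε.trans (Real.le_sqrt_self_iff.2 (by linarith))
  calc _ ≤ |survival μ (shift 𝒜) A ⌊t / c⌋₊ - Real.exp (-(c * ⌊t / c⌋₊))| +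
        |Real.exp (-(c * ⌊t / c⌋₊)) - Real.exp (-t)| := by
        rw [hset]; exact abs_sub_le _ _ _
    _ ≤ 3 * √ε + 2 * √ε := add_le_add (hclose _)
        ((abs_exp_neg_mul_floor_sub_exp_neg_le hc0 ht).trans (by linarith))
    _ = 5 * √ε := by ring

lemma exists_abs_measureReal_hitTime_sub_exp_le_of_measureReal_hitTime_le
    (hT : MeasurePreserving (shift 𝒜) μ μ) (hmix : Tendsto (alphaMix μ) atTop (𝓝 0))
    {n g : ℕ} {r : ℝ} (hn : 1 ≤ n) (hA : MeasurableSet[coordSigma 𝒜 0 (n - 1)] A)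
    (hp : 0 < μ A) (hr : μ.real {x | hitTime (shift 𝒜) A x ≤ n} ≤ r)
    (hε : (1 + g) * r + alphaMix μ g ≤ 1 / 64) :
    ∃ l ∈ Ioc (0 : ℝ) 2, ∀ t : ℝ, 0 ≤ t →
      |μ.real {x | ENNReal.ofReal t < ENNReal.ofReal l * μ A * (hitTime (shift 𝒜) A x : ℝ≥0∞)}
        - Real.exp (-t)| ≤ 5 * √((1 + g) * r + alphaMix μ g) := by
  have hA' := coordSigma_le _ _ _ hA
  have hr' : 1 - survival μ (shift 𝒜) A n ≤ r := by
    rwa [survival, ← probReal_compl_eq_one_sub (measurableSet_survivalSet hT.measurable hA' n),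
      ← setOf_hitTime_le_eq_compl]
  have hpr := measureReal_le_one_sub_survival hT hA' hn
  have hgap := one_sub_survival_add_le hT hA' hn g
  have hg : (0 : ℝ) ≤ g := g.cast_nonneg
  have hr0 : 0 ≤ r := measureReal_nonneg.trans hr
  refine exists_abs_measureReal_hitTime_sub_exp_le hT hmix hA hp (g := g) ?_ ?_ hε
  · rw [Nat.sub_add_cancel hn]; nlinarith
  · nlinarith [alphaMix_nonneg μ g, mul_nonneg hg hr0]

end ExponentialLaw

theorem hitting_time_exponential_law_general
    {𝒜 : Type*} [MeasurableSpace 𝒜]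
    (μ : Measure (ℕ → 𝒜)) [IsProbabilityMeasure μ]
    (hT : MeasurePreserving (shift 𝒜) μ μ)
    (hmix : Tendsto (alphaMix μ) atTop (𝓝 0))
    {ι : Type*} (A : ι → ℕ → Set (ℕ → 𝒜))
    (hAmeas : ∀ i n, MeasurableSet[coordSigma 𝒜 0 (n - 1)] (A i n))
    (hApos : ∀ i n, 0 < μ (A i n))
    (hshort : Tendsto
      (fun n => ⨆ i,
        (μ {x | hitTime (shift 𝒜) (A i n) x ≤ (n : ℕ∞)}).toReal) atTop (𝓝 0)) :
    ∃ lam : ι → ℕ → ℝ, (∀ i n, lam i n ∈ Set.Ioc (0 : ℝ) 2) ∧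
      Tendsto
        (fun n => ⨆ i, ⨆ t : {t : ℝ // 0 ≤ t},
          |(μ {x | ENNReal.ofReal (t : ℝ) <
              ENNReal.ofReal (lam i n) * μ (A i n) *
                (hitTime (shift 𝒜) (A i n) x : ℝ≥0∞)}).toReal -
            Real.exp (-(t : ℝ))|) atTop (𝓝 0) := by
  set s := fun n => ⨆ i, (μ {x | hitTime (shift 𝒜) (A i n) x ≤ (n : ℕ∞)}).toReal
  have hs : ∀ n, 0 ≤ s n := fun n => Real.iSup_nonneg fun _ => ENNReal.toReal_nonneg
  obtain ⟨g, hg, hgs⟩ := exists_tendsto_atTop_mul_tendsto_zero hs hshort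
  set ε := fun n => (1 + g n) * s n + alphaMix μ (g n)
  have hε : Tendsto ε atTop (𝓝 0) := by
    simpa [ε, add_mul] using (hshort.add hgs).add (hmix.comp hg)
  have hlam : ∀ i n, ∃ l ∈ Ioc (0 : ℝ) 2, 1 ≤ n → ε n ≤ 1 / 64 → ∀ t : ℝ, 0 ≤ t →
      |(μ {x | ENNReal.ofReal t < ENNReal.ofReal l * μ (A i n) *
        (hitTime (shift 𝒜) (A i n) x : ℝ≥0∞)}).toReal - Real.exp (-t)| ≤ 5 * √(ε n) := by
    intro i n
    by_cases hn : 1 ≤ n ∧ ε n ≤ 1 / 64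
    · obtain ⟨l, hl, hbound⟩ := exists_abs_measureReal_hitTime_sub_exp_le_of_measureReal_hitTime_le
        hT hmix (g := g n) (r := s n) hn.1 (hAmeas i n) (hApos i n)
        (le_ciSup (f := fun i => μ.real {x | hitTime (shift 𝒜) (A i n) x ≤ n})
          ⟨1, forall_mem_range.2 fun _ => measureReal_le_one⟩ i) hn.2
      exact ⟨l, hl, fun _ _ => hbound⟩
    · exact ⟨1, by norm_num, fun h1 h2 => absurd ⟨h1, h2⟩ hn⟩
  choose lam hlam hbound using hlam
  refine ⟨lam, hlam, squeeze_zero' (Eventually.of_forall fun n => Real.iSup_nonneg fun i =>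
    Real.iSup_nonneg fun t => abs_nonneg _) ?_ (by simpa using hε.sqrt.const_mul 5)⟩
  filter_upwards [eventually_ge_atTop 1,
    hε.eventually (ge_mem_nhds (by norm_num : (0 : ℝ) < 1 / 64))] with n hn hεn
  exact Real.iSup_le (fun i => Real.iSup_le (fun t => hbound i n hn hεn t t.2) (by positivity))
    (by positivity)

/-- **Hitting times of rare events are asymptotically exponential, uniformly over families.**
For an α-mixing shift system, for any family (indexed by `ι`) of sequences of sets
`A i n ∈ ℱ_0^{n-1}` of positive measure such that `μ(τ_{A i n} ≤ n) → 0` uniformly in `i`,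
there are constants `lam i n ∈ (0,2]` such that
`sup_{t ≥ 0} |μ(lam(A_n)μ(A_n)τ_{A_n} > t) − e^{−t}| → 0`, uniformly in `i`.
(Taking `ι` a singleton gives the statement for a single sequence.) -/
theorem hitting_time_exponential_law
    {𝒜 : Type*} [Countable 𝒜] [MeasurableSpace 𝒜] [DiscreteMeasurableSpace 𝒜]
    (μ : Measure (ℕ → 𝒜)) [IsProbabilityMeasure μ]
    (hT : MeasurePreserving (shift 𝒜) μ μ)
    (hmix : Tendsto (alphaMix μ) atTop (𝓝 0))
    {ι : Type*} (A : ι → ℕ → Set (ℕ → 𝒜))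
    (hAmeas : ∀ i n, MeasurableSet[coordSigma 𝒜 0 (n - 1)] (A i n))
    (hApos : ∀ i n, 0 < μ (A i n))
    (hshort : Tendsto
      (fun n => ⨆ i,
        (μ {x | hitTime (shift 𝒜) (A i n) x ≤ (n : ℕ∞)}).toReal) atTop (𝓝 0)) :
    ∃ lam : ι → ℕ → ℝ, (∀ i n, lam i n ∈ Set.Ioc (0 : ℝ) 2) ∧
      Tendsto
        (fun n => ⨆ i, ⨆ t : {t : ℝ // 0 ≤ t},
          |(μ {x | ENNReal.ofReal (t : ℝ) <
              ENNReal.ofReal (lam i n) * μ (A i n) *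
                (hitTime (shift 𝒜) (A i n) x : ℝ≥0∞)}).toReal -
            Real.exp (-(t : ℝ))|) atTop (𝓝 0) :=
  hitting_time_exponential_law_general μ hT hmix A hAmeas hApos hshort
end
end

section
/- Let (X, T, μ) be an ergodic measure-preserving probability system, A a measurable set with μ(A) > 0, and λ(A) > 0 any constant. Define F_A(t) = μ({x : λ(A)μ(A)τ_A(x) ≤ t}) and G_A(s) = λ(A)^{−1} μ({x : λ(A)μ(A)τ_A(x) > s} | A). Then for all 0 < t < t': ∫_t^{t'} G_A(s) ds − μ(A) ≤ F_A(t') − F_A(t) ≤ ∫_t^{t'} G_A(s) ds + μ(A). -/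
open MeasureTheory Filter Set
open scoped ENNReal Topology

noncomputable section

/-- `F_A(t) = μ(λ(A)μ(A)τ_A ≤ t)`, the distribution function of the rescaled hitting time. -/
def FA {X : Type*} [MeasurableSpace X] (μ : Measure X) (T : X → X) (lam : ℝ)
    (A : Set X) (t : ℝ) : ℝ :=
  (μ {x | ENNReal.ofReal lam * μ A * (hitTime T A x : ℝ≥0∞) ≤ ENNReal.ofReal t}).toReal

/-- `G_A(s) = λ(A)⁻¹ μ(λ(A)μ(A)τ_A > s | A)`, the normalized (non-increasing) distribution
function of the rescaled return time. -/
def GA {X : Type*} [MeasurableSpace X] (μ : Measure X) (T : X → X) (lam : ℝ)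
    (A : Set X) (s : ℝ) : ℝ :=
  lam⁻¹ * (ProbabilityTheory.cond μ A
    {x | ENNReal.ofReal s < ENNReal.ofReal lam * μ A * (hitTime T A x : ℝ≥0∞)}).toReal


/-! Write `c = λ(A) μ(A)`. As `τ_A` is integer valued, `F_A(u) = μ(τ_A ≤ ⌊u / c⌋)` for `u ≥ 0`, so
`F_A(u + c) - F_A(u) = μ(τ_A = ⌊u / c⌋ + 1)`. By invariance of `μ` and
`{τ_A > n + 1} = T⁻¹({τ_A > n} \ A)`, `μ(τ_A = n + 1) = μ(A ∩ {τ_A > n})`; hence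
`G_A(u) = c⁻¹ (F_A(u + c) - F_A(u))`, and each such jump is at most `μ(A)`. Integrating over
`[t, t']` telescopes to `c⁻¹ (∫_{t'}^{t'+c} F_A - ∫_t^{t+c} F_A)`, which by monotonicity of `F_A`
lies between `F_A(t') - F_A(t + c)` and `F_A(t' + c) - F_A(t)`; the jumps at `t` and `t'` give
the bounds. -/

section HitTime

variable {X : Type*} {T : X → X} {A : Set X}

theorem coe_lt_hitTime_iff {x : X} {n : ℕ} :
    (n : ℕ∞) < hitTime T A x ↔ ∀ k, 1 ≤ k → k ≤ n → T^[k] x ∉ A := by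
  rw [← ENat.add_one_le_iff (ENat.natCast_ne_top n), hitTime, le_iInf₂_iff]
  refine forall_congr' fun k => ?_
  simp only [mem_ofPred_eq, and_imp]
  norm_cast
  exact ⟨fun h hk hkn hkA => by have := h hk hkA; omega,
    fun h hk hkA => by by_contra hlt; exact h hk (by omega) hkA⟩

theorem add_one_lt_hitTime_iff {x : X} {n : ℕ} :
    (n : ℕ∞) + 1 < hitTime T A x ↔ T x ∉ A ∧ (n : ℕ∞) < hitTime T A (T x) := by
  simp only [← Nat.cast_succ, coe_lt_hitTime_iff, ← Function.iterate_succ_apply]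
  refine ⟨fun h => ⟨h 1 le_rfl (by omega), fun k hk hkn => h (k + 1) (by omega) (by omega)⟩,
    ?_⟩
  rintro ⟨hx, h⟩ k hk hkn
  obtain ⟨j, rfl⟩ := Nat.exists_eq_add_of_le' hk
  rcases j with _ | j
  · simpa using hx
  · exact h (j + 1) (by omega) (by omega)

theorem setOf_add_one_lt_hitTime (n : ℕ) :
    {x | (n : ℕ∞) + 1 < hitTime T A x} = T ⁻¹' ({x | (n : ℕ∞) < hitTime T A x} \ A) := by
  ext x
  simp [add_one_lt_hitTime_iff, and_comm]

variable [MeasurableSpace X]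

theorem measurableSet_coe_lt_hitTime (hT : Measurable T) (hA : MeasurableSet A) (n : ℕ) :
    MeasurableSet {x | (n : ℕ∞) < hitTime T A x} := by
  induction n with
  | zero =>
    have hpos (x : X) : ((0 : ℕ) : ℕ∞) < hitTime T A x :=
      coe_lt_hitTime_iff.2 fun k hk hk0 => absurd hk (by omega)
    simp_all
  | succ n ih => simpa only [Nat.cast_succ, setOf_add_one_lt_hitTime] using hT (ih.diff hA)

theorem measurableSet_hitTime_le_coe (hT : Measurable T) (hA : MeasurableSet A) (n : ℕ) :
    MeasurableSet {x | hitTime T A x ≤ n} := by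
  simpa only [compl_ofPred, not_lt] using (measurableSet_coe_lt_hitTime hT hA n).compl

variable {μ : Measure X} [IsFiniteMeasure μ]

theorem measure_hitTime_eq_add_one (hT : MeasurePreserving T μ μ) (hA : MeasurableSet A)
    (n : ℕ) : μ {x | hitTime T A x = n + 1} = μ (A ∩ {x | (n : ℕ∞) < hitTime T A x}) := by
  set S := {x | (n : ℕ∞) < hitTime T A x}
  have hS : MeasurableSet S := measurableSet_coe_lt_hitTime hT.measurable hA n
  have hS' : MeasurableSet {x | (n : ℕ∞) + 1 < hitTime T A x} := by
    simpa only [Nat.cast_succ] using measurableSet_coe_lt_hitTime hT.measurable hA (n + 1)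
  have hsplit : S = {x | (n : ℕ∞) + 1 < hitTime T A x} ∪ {x | hitTime T A x = n + 1} := by
    ext x
    simp only [S, mem_ofPred_eq, mem_union, ← ENat.add_one_le_iff (ENat.natCast_ne_top n),
      le_iff_lt_or_eq, eq_comm]
  have hdisj : Disjoint {x | (n : ℕ∞) + 1 < hitTime T A x} {x | hitTime T A x = n + 1} :=
    disjoint_left.2 fun x hlt heq => (ne_of_lt hlt) (Eq.symm heq)
  have htail : μ {x | (n : ℕ∞) + 1 < hitTime T A x} = μ (S \ A) := by
    rw [setOf_add_one_lt_hitTime, hT.measure_preimage (hS.diff hA).nullMeasurableSet]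
  have key : μ (S \ A) + μ {x | hitTime T A x = n + 1} = μ (S \ A) + μ (A ∩ S) :=
    calc μ (S \ A) + μ {x | hitTime T A x = n + 1} = μ S := by
          rw [← htail, ← measure_union' hdisj hS', hsplit]
      _ = μ (S \ A) + μ (A ∩ S) := by rw [inter_comm, measure_sdiff_add_inter S hA]
  exact (ENNReal.add_right_inj (measure_ne_top μ _)).1 key

theorem measure_hitTime_le_add_one (hT : MeasurePreserving T μ μ) (hA : MeasurableSet A)
    (n : ℕ) : μ {x | hitTime T A x ≤ n + 1} =
      μ {x | hitTime T A x ≤ n} + μ (A ∩ {x | (n : ℕ∞) < hitTime T A x}) := by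
  have hsplit :
      {x | hitTime T A x ≤ n + 1} = {x | hitTime T A x ≤ n} ∪ {x | hitTime T A x = n + 1} := by
    ext x
    simp only [mem_ofPred_eq, mem_union, le_iff_lt_or_eq,
      ENat.lt_add_one_iff (ENat.natCast_ne_top n)]
  have hdisj : Disjoint {x | hitTime T A x ≤ n} {x | hitTime T A x = n + 1} :=
    disjoint_left.2 fun x (hle : _ ≤ _) (heq : _ = _) =>
      ((ENat.lt_add_one_iff (ENat.natCast_ne_top n)).2 le_rfl).not_ge (heq ▸ hle)
  rw [hsplit, measure_union' hdisj (measurableSet_hitTime_le_coe hT.measurable hA n),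
    measure_hitTime_eq_add_one hT hA]

end HitTime

theorem ofReal_mul_coe_le_ofReal_iff {c u : ℝ} (hc : 0 < c) (hu : 0 ≤ u) (a : ℕ∞) :
    ENNReal.ofReal c * a ≤ ENNReal.ofReal u ↔ a ≤ ⌊u / c⌋₊ := by
  induction a using ENat.recTopCoe with
  | top => simp [ENNReal.mul_top, hc]
  | coe n =>
    rw [ENat.toENNReal_coe, ← ENNReal.ofReal_natCast, ← ENNReal.ofReal_mul hc.le,
      ENNReal.ofReal_le_ofReal_iff hu, Nat.cast_le, Nat.le_floor_iff (by positivity),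
      le_div_iff₀ hc, mul_comm]

theorem ofReal_lt_ofReal_mul_coe_iff {c u : ℝ} (hc : 0 < c) (hu : 0 ≤ u) (a : ℕ∞) :
    ENNReal.ofReal u < ENNReal.ofReal c * a ↔ (⌊u / c⌋₊ : ℕ∞) < a := by
  rw [← not_le, ofReal_mul_coe_le_ofReal_iff hc hu, not_le]

section Monotone

variable {f : ℝ → ℝ}

theorem Monotone.integral_comp_add_right_sub (hf : Monotone f) (a b c : ℝ) :
    ∫ s in a..b, (f (s + c) - f s) = (∫ s in b..b + c, f s) - ∫ s in a..a + c, f s := by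
  have hint (u v : ℝ) : IntervalIntegrable f volume u v := hf.intervalIntegrable
  have hshift : IntervalIntegrable (fun s => f (s + c)) volume a b :=
    (hf.comp (monotone_id.add_const c)).intervalIntegrable
  rw [intervalIntegral.integral_sub hshift (hint a b), intervalIntegral.integral_comp_add_right,
    ← intervalIntegral.integral_add_adjacent_intervals (hint (a + c) b) (hint b (b + c)),
    ← intervalIntegral.integral_add_adjacent_intervals (hint a (a + c)) (hint (a + c) b)]
  ring

theorem Monotone.mul_le_integral (hf : Monotone f) {c : ℝ} (hc : 0 ≤ c) (a : ℝ) :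
    c * f a ≤ ∫ s in a..a + c, f s := by
  simpa using intervalIntegral.integral_mono_on (le_add_of_nonneg_right hc : a ≤ a + c)
    intervalIntegrable_const (hf.intervalIntegrable (μ := volume)) fun s hs => hf hs.1

theorem Monotone.integral_le_mul (hf : Monotone f) {c : ℝ} (hc : 0 ≤ c) (a : ℝ) :
    ∫ s in a..a + c, f s ≤ c * f (a + c) := by
  simpa using intervalIntegral.integral_mono_on (le_add_of_nonneg_right hc : a ≤ a + c)
    (hf.intervalIntegrable (μ := volume)) intervalIntegrable_const fun s hs => hf hs.2

theorem Monotone.sub_le_inv_mul_integral_comp_add_right_sub (hf : Monotone f) {c : ℝ}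
    (hc : 0 < c) (a b : ℝ) :
    f b - f (a + c) ≤ c⁻¹ * ∫ s in a..b, (f (s + c) - f s) := by
  rw [hf.integral_comp_add_right_sub, le_inv_mul_iff₀ hc]
  linarith [hf.mul_le_integral hc.le b, hf.integral_le_mul hc.le a]

theorem Monotone.inv_mul_integral_comp_add_right_sub_le (hf : Monotone f) {c : ℝ}
    (hc : 0 < c) (a b : ℝ) :
    c⁻¹ * ∫ s in a..b, (f (s + c) - f s) ≤ f (b + c) - f a := by
  rw [hf.integral_comp_add_right_sub, inv_mul_le_iff₀ hc]
  linarith [hf.integral_le_mul hc.le b, hf.mul_le_integral hc.le a]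

end Monotone

section Rescaled

variable {X : Type*} [MeasurableSpace X] {μ : Measure X} [IsFiniteMeasure μ] {T : X → X}
  {A : Set X} {lam : ℝ}

theorem mul_measureReal_pos (hlam : 0 < lam) (hApos : 0 < μ A) : 0 < lam * μ.real A :=
  mul_pos hlam (ENNReal.toReal_pos hApos.ne' (measure_ne_top μ A))

theorem ofReal_mul_measure_eq (hlam : 0 ≤ lam) :
    ENNReal.ofReal lam * μ A = ENNReal.ofReal (lam * μ.real A) := by
  rw [ENNReal.ofReal_mul hlam, ofReal_measureReal]

theorem FA_monotone : Monotone (FA μ T lam A) := fun _ _ huv =>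
  measureReal_mono fun _ hx => hx.trans (ENNReal.ofReal_le_ofReal huv)

theorem FA_eq_measureReal_hitTime_le (hlam : 0 < lam) (hApos : 0 < μ A) {u : ℝ} (hu : 0 ≤ u) :
    FA μ T lam A u = μ.real {x | hitTime T A x ≤ ⌊u / (lam * μ.real A)⌋₊} := by
  simp only [FA, ofReal_mul_measure_eq hlam.le,
    ofReal_mul_coe_le_ofReal_iff (mul_measureReal_pos hlam hApos) hu]
  rfl

theorem GA_eq_measureReal_inter (hA : MeasurableSet A) (hlam : 0 < lam) (hApos : 0 < μ A)
    {u : ℝ} (hu : 0 ≤ u) :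
    GA μ T lam A u = (lam * μ.real A)⁻¹ *
      μ.real (A ∩ {x | (⌊u / (lam * μ.real A)⌋₊ : ℕ∞) < hitTime T A x}) := by
  simp only [GA, ofReal_mul_measure_eq hlam.le,
    ofReal_lt_ofReal_mul_coe_iff (mul_measureReal_pos hlam hApos) hu,
    ProbabilityTheory.cond_apply hA, ENNReal.toReal_mul, ENNReal.toReal_inv, mul_inv,
    ← measureReal_def]
  ring

theorem FA_add_sub_FA (hT : MeasurePreserving T μ μ) (hA : MeasurableSet A) (hlam : 0 < lam)
    (hApos : 0 < μ A) {u : ℝ} (hu : 0 ≤ u) :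
    FA μ T lam A (u + lam * μ.real A) - FA μ T lam A u =
      μ.real (A ∩ {x | (⌊u / (lam * μ.real A)⌋₊ : ℕ∞) < hitTime T A x}) := by
  have hc := mul_measureReal_pos hlam hApos
  rw [FA_eq_measureReal_hitTime_le hlam hApos (by positivity),
    FA_eq_measureReal_hitTime_le hlam hApos hu, add_div, div_self hc.ne',
    Nat.floor_add_one (by positivity), Nat.cast_succ, measureReal_def,
    measure_hitTime_le_add_one hT hA,
    ENNReal.toReal_add (measure_ne_top μ _) (measure_ne_top μ _)]
  simp [measureReal_def]

theorem GA_eq_inv_mul_FA_add_sub_FA (hT : MeasurePreserving T μ μ) (hA : MeasurableSet A)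
    (hlam : 0 < lam) (hApos : 0 < μ A) {u : ℝ} (hu : 0 ≤ u) :
    GA μ T lam A u = (lam * μ.real A)⁻¹ *
      (FA μ T lam A (u + lam * μ.real A) - FA μ T lam A u) := by
  rw [GA_eq_measureReal_inter hA hlam hApos hu, FA_add_sub_FA hT hA hlam hApos hu]

theorem FA_add_sub_FA_le (hT : MeasurePreserving T μ μ) (hA : MeasurableSet A) (hlam : 0 < lam)
    (hApos : 0 < μ A) {u : ℝ} (hu : 0 ≤ u) :
    FA μ T lam A (u + lam * μ.real A) - FA μ T lam A u ≤ μ.real A := by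
  rw [FA_add_sub_FA hT hA hlam hApos hu]
  exact measureReal_mono inter_subset_left

end Rescaled

/-- **Increments of the hitting-time distribution versus the integral of the return-time
function.** For an ergodic system, `A` with `μ(A) > 0` and any `λ(A) > 0`, for all
`0 < t < t'`:
`∫_t^{t'} G_A(s) ds − μ(A) ≤ F_A(t') − F_A(t) ≤ ∫_t^{t'} G_A(s) ds + μ(A)`. -/
theorem FA_increment_integral_GA
    {X : Type*} [MeasurableSpace X] (μ : Measure X) [IsProbabilityMeasure μ]
    (T : X → X) (hErg : Ergodic T μ)
    (A : Set X) (hAmeas : MeasurableSet A) (hApos : 0 < μ A)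
    (lam : ℝ) (hlam : 0 < lam)
    (t t' : ℝ) (ht : 0 < t) (htt' : t < t') :
    (∫ s in t..t', GA μ T lam A s) - (μ A).toReal ≤ FA μ T lam A t' - FA μ T lam A t ∧
    FA μ T lam A t' - FA μ T lam A t ≤ (∫ s in t..t', GA μ T lam A s) + (μ A).toReal := by
  have hT := hErg.toMeasurePreserving
  set c := lam * μ.real A
  have hc : 0 < c := mul_measureReal_pos hlam hApos
  have hF : Monotone (FA μ T lam A) := FA_monotone
  have hGA : ∫ s in t..t', GA μ T lam A s =
      c⁻¹ * ∫ s in t..t', (FA μ T lam A (s + c) - FA μ T lam A s) := by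
    rw [← intervalIntegral.integral_const_mul]
    refine intervalIntegral.integral_congr fun s hs => ?_
    rw [uIcc_of_le htt'.le] at hs
    exact GA_eq_inv_mul_FA_add_sub_FA hT hAmeas hlam hApos (ht.le.trans hs.1)
  have hjump := FA_add_sub_FA_le hT hAmeas hlam hApos ht.le
  have hjump' := FA_add_sub_FA_le hT hAmeas hlam hApos (ht.trans htt').le
  rw [hGA, ← measureReal_def]
  constructor
  · linarith [hF.inv_mul_integral_comp_add_right_sub_le hc t t']
  · linarith [hF.sub_le_inv_mul_integral_comp_add_right_sub hc t t']
end
end
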